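/- arXiv:0902.1060 — 4 statements merged into one kernel-verified Lean document; each statement's English description precedes it below -/
import Mathlib

section
/- If M ∈ ℝ_+^{m×n} is nonnegative, v ∈ ℝ_+^m, w ∈ ℝ_+^n are nonnegative and satisfy v_i w_j ≤ M_{ij} for all i,j (a rank-one underapproximation), then s(v) + s(w) ≥ s(M), where s denotes the proportion of zero entries. -/
/-- For a nonnegative rank-one underapproximation `v wᵀ ≤ M` of a nonnegative matrix `M`,
`s(v) + s(w) ≥ s(M)` where `s` is the proportion of zero entries. -/
theorem sparsity_underapprox (m n : ℕ) (hm : 0 < m) (hn : 0 < n)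
    (M : Matrix (Fin m) (Fin n) ℝ) (v : Fin m → ℝ) (w : Fin n → ℝ)
    (hM : ∀ i j, 0 ≤ M i j) (hv : ∀ i, 0 ≤ v i) (hw : ∀ j, 0 ≤ w j)
    (hunder : ∀ i j, v i * w j ≤ M i j) :
    ((Finset.univ.filter (fun p : Fin m × Fin n => M p.1 p.2 = 0)).card : ℝ) / (m * n) ≤
      ((Finset.univ.filter (fun i : Fin m => v i = 0)).card : ℝ) / m +
        ((Finset.univ.filter (fun j : Fin n => w j = 0)).card : ℝ) / n := by
  set A := Finset.univ.filter (fun p : Fin m × Fin n => M p.1 p.2 = 0)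
  set B := Finset.univ.filter (fun i : Fin m => v i = 0)
  set C := Finset.univ.filter (fun j : Fin n => w j = 0)
  have hsub : A ⊆ (B ×ˢ Finset.univ) ∪ (Finset.univ ×ˢ C) := by
    intro p hp
    simp only [A, Finset.mem_filter, Finset.mem_univ, true_and] at hp
    have h0 : v p.1 * w p.2 = 0 :=
      le_antisymm (hp ▸ hunder p.1 p.2) (mul_nonneg (hv p.1) (hw p.2))
    rcases mul_eq_zero.mp h0 with h | h
    · exact Finset.mem_union_left _ (by simp [B, h])
    · exact Finset.mem_union_right _ (by simp [C, h])
  have hcard : (A.card : ℝ) ≤ B.card * n + m * C.card := by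
    have := Finset.card_le_card hsub
    have h2 := Finset.card_union_le (B ×ˢ (Finset.univ : Finset (Fin n)))
      ((Finset.univ : Finset (Fin m)) ×ˢ C)
    have h3 : A.card ≤ B.card * n + m * C.card := by
      calc A.card ≤ _ := this
        _ ≤ _ := h2
        _ = B.card * n + m * C.card := by simp [Finset.card_product]
    exact_mod_cast h3
  have hmpos : (0:ℝ) < m := by exact_mod_cast hm
  have hnpos : (0:ℝ) < n := by exact_mod_cast hn
  rw [div_add_div _ _ (ne_of_gt hmpos) (ne_of_gt hnpos), div_le_div_iff₀ (by positivity) (by positivity)]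
  nlinarith [hcard, mul_pos hmpos hnpos]
end

section
/- Let M ∈ ℝ_+^{m×n} and suppose V ∈ ℝ_+^{m×r}, W ∈ ℝ_+^{r×n} satisfy VW ≤ M entrywise. Then for each k, s(V_{:k}) + s(W_{k:}) ≥ s(M), and moreover s(V) + s(W) ≥ s(M), where s denotes the proportion of zero entries. -/
/-- For a nonnegative underapproximation `V W ≤ M` of a nonnegative matrix `M`,
each pair of factors satisfies `s(V_{:k}) + s(W_{k:}) ≥ s(M)`, and `s(V) + s(W) ≥ s(M)`,
where `s` is the proportion of zero entries. -/
theorem sparsity_underapprox_rank_r (m n r : ℕ) (hm : 0 < m) (hn : 0 < n) (hr : 0 < r)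
    (M : Matrix (Fin m) (Fin n) ℝ) (V : Matrix (Fin m) (Fin r) ℝ) (W : Matrix (Fin r) (Fin n) ℝ)
    (hM : ∀ i j, 0 ≤ M i j) (hV : ∀ i k, 0 ≤ V i k) (hW : ∀ k j, 0 ≤ W k j)
    (hunder : ∀ i j, (∑ k, V i k * W k j) ≤ M i j) :
    (∀ k : Fin r,
      ((Finset.univ.filter (fun p : Fin m × Fin n => M p.1 p.2 = 0)).card : ℝ) / (m * n) ≤
        ((Finset.univ.filter (fun i : Fin m => V i k = 0)).card : ℝ) / m +
          ((Finset.univ.filter (fun j : Fin n => W k j = 0)).card : ℝ) / n) ∧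
    ((Finset.univ.filter (fun p : Fin m × Fin n => M p.1 p.2 = 0)).card : ℝ) / (m * n) ≤
      ((Finset.univ.filter (fun q : Fin m × Fin r => V q.1 q.2 = 0)).card : ℝ) / (m * r) +
        ((Finset.univ.filter (fun q : Fin r × Fin n => W q.1 q.2 = 0)).card : ℝ) / (r * n) := by
  have hmR : (0:ℝ) < m := by exact_mod_cast hm
  have hnR : (0:ℝ) < n := by exact_mod_cast hn
  have hrR : (0:ℝ) < r := by exact_mod_cast hr
  set Z := Finset.univ.filter (fun p : Fin m × Fin n => M p.1 p.2 = 0) with hZ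
  have key : ∀ k : Fin r, (Z.card:ℝ)/(m*n) ≤
      ((Finset.univ.filter (fun i : Fin m => V i k = 0)).card : ℝ)/m +
      ((Finset.univ.filter (fun j : Fin n => W k j = 0)).card : ℝ)/n := by
    intro k
    set A := Finset.univ.filter (fun i : Fin m => V i k = 0) with hA
    set B := Finset.univ.filter (fun j : Fin n => W k j = 0) with hB
    have hsub : Z ⊆ (A ×ˢ Finset.univ) ∪ (Finset.univ ×ˢ B) := by
      intro p hp
      simp only [hZ, Finset.mem_filter, Finset.mem_univ, true_and] at hp
      have hnn : ∀ l ∈ (Finset.univ : Finset (Fin r)), 0 ≤ V p.1 l * W l p.2 :=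
        fun l _ => mul_nonneg (hV p.1 l) (hW l p.2)
      have hterm : V p.1 k * W k p.2 = 0 := by
        have hs := hunder p.1 p.2
        rw [hp] at hs
        exact (Finset.sum_eq_zero_iff_of_nonneg hnn).mp
          (le_antisymm hs (Finset.sum_nonneg hnn)) k (Finset.mem_univ k)
      rcases mul_eq_zero.mp hterm with h | h
      · exact Finset.mem_union_left _ (by simp [hA, Finset.mem_product, h])
      · exact Finset.mem_union_right _ (by simp [hB, Finset.mem_product, h])
    have hcard : Z.card ≤ A.card * n + m * B.card := by
      calc Z.card ≤ _ := Finset.card_le_card hsub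
        _ ≤ (A ×ˢ (Finset.univ : Finset (Fin n))).card
            + ((Finset.univ : Finset (Fin m)) ×ˢ B).card := Finset.card_union_le _ _
        _ = A.card * n + m * B.card := by simp [Finset.card_product, mul_comm]
    have heq : (A.card:ℝ)/m + (B.card:ℝ)/n = ((A.card * n + m * B.card : ℕ):ℝ)/(m*n) := by
      push_cast
      field_simp
    rw [heq]
    gcongr
  refine ⟨key, ?_⟩
  have hVcard : (Finset.univ.filter (fun q : Fin m × Fin r => V q.1 q.2 = 0)).card
      = ∑ k : Fin r, (Finset.univ.filter (fun i : Fin m => V i k = 0)).card := by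
    simp only [Finset.card_filter, Fintype.sum_prod_type]
    rw [Finset.sum_comm]
  have hWcard : (Finset.univ.filter (fun q : Fin r × Fin n => W q.1 q.2 = 0)).card
      = ∑ k : Fin r, (Finset.univ.filter (fun j : Fin n => W k j = 0)).card := by
    simp only [Finset.card_filter, Fintype.sum_prod_type]
  have hsum := Finset.sum_le_sum (fun k (_ : k ∈ (Finset.univ : Finset (Fin r))) => key k)
  rw [Finset.sum_const, Finset.card_univ, Fintype.card_fin] at hsum
  have hsum2 : (r:ℝ) * ((Z.card:ℝ)/(m*n)) ≤
      (∑ k : Fin r, ((Finset.univ.filter (fun i : Fin m => V i k = 0)).card : ℝ))/m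
      + (∑ k : Fin r, ((Finset.univ.filter (fun j : Fin n => W k j = 0)).card : ℝ))/n := by
    rw [Finset.sum_div, Finset.sum_div]
    simpa [Finset.sum_add_distrib, nsmul_eq_mul] using hsum
  rw [hVcard, hWcard]
  push_cast
  rw [div_add_div _ _ (by positivity : (m:ℝ)*r ≠ 0) (by positivity : (r:ℝ)*n ≠ 0),
    div_le_div_iff₀ (by positivity) (by positivity)]
  rw [div_add_div _ _ hmR.ne' hnR.ne', ← mul_div_assoc,
    div_le_div_iff₀ (mul_pos hmR hnR) (mul_pos hmR hnR)] at hsum2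
  have h3 := le_of_mul_le_mul_right hsum2 (mul_pos hmR hnR)
  nlinarith [h3, mul_pos hmR hrR, mul_pos hrR hnR, mul_pos hmR hnR]
end

section
/- If a row i of a locally optimal rank-one underapproximation residual satisfies R(i,J) > 0 for all j ∈ J (where J is the support of w), then increasing v_i by a sufficiently small ε > 0 keeps the underapproximation constraint satisfied and strictly decreases ‖M − vw^T‖_F². Precisely: let M ∈ ℝ_+^{m×n}, v ∈ ℝ_+^m, w ∈ ℝ_+^n with vw^T ≤ M, let i be an index with w ≠ 0 and M_{ij} − v_i w_j > 0 for every j with w_j > 0. Then there exists ε > 0 such that (v + ε e_i, w) still satisfies the underapproximation constraint and ‖M − (v+εe_i)w^T‖_F² < ‖M − vw^T‖_F². -/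
/-- If row `i` of the residual of a rank-one underapproximation is strictly positive on the
support of `w` (and `w ≠ 0`), then `v i` can be increased by a small `ε > 0` while keeping
feasibility and strictly decreasing the squared Frobenius error. -/
theorem increase_vi_improves (m n : ℕ)
    (M : Matrix (Fin m) (Fin n) ℝ) (v : Fin m → ℝ) (w : Fin n → ℝ)
    (hM : ∀ i j, 0 ≤ M i j) (hv : ∀ i, 0 ≤ v i) (hw : ∀ j, 0 ≤ w j)
    (hunder : ∀ i j, v i * w j ≤ M i j)
    (i : Fin m) (hwne : w ≠ 0)
    (hpos : ∀ j, 0 < w j → 0 < M i j - v i * w j) :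
    ∃ ε > 0,
      (∀ k j, (v k + (if k = i then ε else 0)) * w j ≤ M k j) ∧
      ∑ k, ∑ j, (M k j - (v k + (if k = i then ε else 0)) * w j) ^ 2 <
        ∑ k, ∑ j, (M k j - v k * w j) ^ 2 := by
  classical
  -- there is a coordinate where w is positive
  obtain ⟨j0, hj0⟩ : ∃ j, 0 < w j := by
    by_contra h
    push_neg at h
    exact hwne (funext fun j => le_antisymm (h j) (hw j))
  have hne : (Finset.univ : Finset (Fin n)).Nonempty := ⟨j0, Finset.mem_univ _⟩
  set S : ℝ := ∑ j, w j * (M i j - v i * w j) with hSdef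
  set Q : ℝ := ∑ j, (w j) ^ 2 with hQdef
  have hS : 0 < S := by
    apply Finset.sum_pos' (fun j _ => mul_nonneg (hw j) (by linarith [hunder i j]))
    exact ⟨j0, Finset.mem_univ _, mul_pos hj0 (hpos j0 hj0)⟩
  have hQ : 0 < Q := by
    apply Finset.sum_pos' (fun j _ => sq_nonneg _)
    exact ⟨j0, Finset.mem_univ _, by positivity⟩
  set f : Fin n → ℝ := fun j => if 0 < w j then (M i j - v i * w j) / (w j) else S / Q with hf
  set ε : ℝ := min (S / Q) (Finset.univ.inf' hne f) with hε
  have hεpos : 0 < ε := by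
    apply lt_min (div_pos hS hQ)
    rw [Finset.lt_inf'_iff]
    intro j _
    simp only [hf]
    split_ifs with h
    · exact div_pos (hpos j h) h
    · exact div_pos hS hQ
  have hεf : ∀ j, ε ≤ f j := fun j =>
    le_trans (min_le_right _ _) (Finset.inf'_le f (Finset.mem_univ j))
  have hεQ : ε * Q ≤ S := by
    have := min_le_left (S / Q) (Finset.univ.inf' hne f)
    calc ε * Q ≤ (S / Q) * Q := by nlinarith
    _ = S := div_mul_cancel₀ S (ne_of_gt hQ)
  refine ⟨ε, hεpos, ?_, ?_⟩
  · intro k j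
    by_cases hk : k = i
    · subst hk
      simp only [if_pos rfl, ite_true, eq_self_iff_true]
      by_cases hwj : 0 < w j
      · have h1 : ε ≤ (M k j - v k * w j) / w j := by
          have := hεf j; simpa [hf, if_pos hwj] using this
        have := (le_div_iff₀ hwj).mp h1
        nlinarith
      · have : w j = 0 := le_antisymm (le_of_not_gt hwj) (hw j)
        simp [this, hM k j]
    · simp only [if_neg hk, add_zero]
      exact hunder k j
  · refine Finset.sum_lt_sum (fun k _ => ?_) ⟨i, Finset.mem_univ i, ?_⟩
    · by_cases hk : k = i
      · subst hk
        apply Finset.sum_le_sum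
        intro j _
        simp only [if_pos rfl, ite_true, eq_self_iff_true]
        by_cases hwj : 0 < w j
        · have h1 : ε ≤ (M k j - v k * w j) / w j := by
            have := hεf j; simpa [hf, if_pos hwj] using this
          have h2 := (le_div_iff₀ hwj).mp h1
          have h3 : 0 ≤ ε * w j := mul_nonneg hεpos.le (hw j)
          have h4 : 0 ≤ M k j - v k * w j := by linarith [hunder k j]
          nlinarith [mul_le_mul_of_nonneg_left h2 h3, mul_nonneg h3 h4]
        · have : w j = 0 := le_antisymm (le_of_not_gt hwj) (hw j)
          simp [this]
      · simp [hk]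
    · simp only [if_pos rfl, ite_true, eq_self_iff_true]
      have key : ∑ j, (M i j - (v i + ε) * w j) ^ 2
          = (∑ j, (M i j - v i * w j) ^ 2) - 2 * ε * S + ε ^ 2 * Q := by
        rw [hSdef, hQdef, Finset.mul_sum, Finset.mul_sum, ← Finset.sum_sub_distrib,
          ← Finset.sum_add_distrib]
        exact Finset.sum_congr rfl fun j _ => by ring
      rw [key]
      nlinarith [mul_pos hεpos hS]
end

section
/- Every optimal solution (v,w) of min_{v≥0, w≥0, v_i w_j ≤ M_{ij}} ‖M − vw^T‖_F², where M ∈ {0,1}^{m×n}, satisfies vw^T ∈ {0,1}^{m×n}, i.e., each entry v_i w_j is either 0 or 1. -/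
/-- Every globally optimal solution of the rank-one underapproximation problem for a binary
matrix `M` has a binary product: each entry `v_i w_j` is either `0` or `1`. -/
theorem optimal_rank_one_underapprox_binary (m n : ℕ)
    (M : Matrix (Fin m) (Fin n) ℝ) (v : Fin m → ℝ) (w : Fin n → ℝ)
    (hM : ∀ i j, M i j = 0 ∨ M i j = 1)
    (hv : ∀ i, 0 ≤ v i) (hw : ∀ j, 0 ≤ w j)
    (hunder : ∀ i j, v i * w j ≤ M i j)
    (hopt : ∀ (v' : Fin m → ℝ) (w' : Fin n → ℝ),
      (∀ i, 0 ≤ v' i) → (∀ j, 0 ≤ w' j) → (∀ i j, v' i * w' j ≤ M i j) →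
      ∑ i, ∑ j, (M i j - v i * w j) ^ 2 ≤ ∑ i, ∑ j, (M i j - v' i * w' j) ^ 2) :
    ∀ i j, v i * w j = 0 ∨ v i * w j = 1 := by
  set v' : Fin m → ℝ := fun i => if v i = 0 then 0 else 1 with hv'def
  set w' : Fin n → ℝ := fun j => if w j = 0 then 0 else 1 with hw'def
  have hv' : ∀ i, 0 ≤ v' i := fun i => by simp [hv'def]; split <;> norm_num
  have hw' : ∀ j, 0 ≤ w' j := fun j => by simp [hw'def]; split <;> norm_num
  have hMnn : ∀ i j, (0:ℝ) ≤ M i j := fun i j => by rcases hM i j with h | h <;> simp [h]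
  -- vw ≤ v'w' ≤ M
  have key : ∀ i j, v i * w j ≤ v' i * w' j ∧ v' i * w' j ≤ M i j := by
    intro i j
    by_cases hvi : v i = 0
    · simp [hv'def, hvi, hMnn i j]
    by_cases hwj : w j = 0
    · simp [hw'def, hwj, hMnn i j]
    have hpos : 0 < v i * w j :=
      mul_pos (lt_of_le_of_ne (hv i) (Ne.symm hvi)) (lt_of_le_of_ne (hw j) (Ne.symm hwj))
    have hM1 : M i j = 1 := by
      rcases hM i j with h | h
      · exact absurd (hunder i j) (by rw [h]; linarith)
      · exact h
    simp [hv'def, hw'def, hvi, hwj, hM1, (hunder i j).trans hM1.le]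
  have hunder' : ∀ i j, v' i * w' j ≤ M i j := fun i j => (key i j).2
  have hle : ∀ i j, (M i j - v' i * w' j) ^ 2 ≤ (M i j - v i * w j) ^ 2 := by
    intro i j
    have h1 := (key i j).1
    have h2 := (key i j).2
    nlinarith [hunder i j]
  have hsum1 : ∑ i, ∑ j, (M i j - v' i * w' j) ^ 2 ≤ ∑ i, ∑ j, (M i j - v i * w j) ^ 2 :=
    Finset.sum_le_sum fun i _ => Finset.sum_le_sum fun j _ => hle i j
  have hsum2 := hopt v' w' hv' hw' hunder'
  have heq : ∑ i, ∑ j, (M i j - v' i * w' j) ^ 2 = ∑ i, ∑ j, (M i j - v i * w j) ^ 2 :=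
    le_antisymm hsum1 hsum2
  have houter : ∀ i, ∑ j, (M i j - v' i * w' j) ^ 2 = ∑ j, (M i j - v i * w j) ^ 2 := by
    intro i
    have := (Finset.sum_eq_sum_iff_of_le
      (fun i _ => Finset.sum_le_sum fun j _ => hle i j)).1 heq i (Finset.mem_univ i)
    exact this
  have hentry : ∀ i j, (M i j - v' i * w' j) ^ 2 = (M i j - v i * w j) ^ 2 := by
    intro i j
    exact (Finset.sum_eq_sum_iff_of_le (fun j _ => hle i j)).1 (houter i) j (Finset.mem_univ j)
  intro i j
  have h1 := (key i j).1
  have h2 := (key i j).2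
  have h3 := hunder i j
  have h4 := hentry i j
  have heqq : v i * w j = v' i * w' j := by nlinarith
  rw [heqq]
  simp only [hv'def, hw'def]
  split <;> split <;> norm_num
end
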